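/- Assume 0 ∈ A, every α ∈ A satisfies |α| ≤ 2, and every multi-index α^i of the poised Birkhoff interpolation data D belongs to A. If the spectral norm of the inverse of the normalized interpolation matrix satisfies ‖M̂^{-1}‖₂ ≤ Λ/√(q+1), then D is Λ-poised with respect to A in the ball B(y^0, Δ(Y)). -/

import Mathlib

noncomputable section

open Metric

/-- `ℝ^n` with the Euclidean norm. -/
abbrev E (n : ℕ) := EuclideanSpace ℝ (Fin n)

/-- Partial derivative in coordinate `i`. -/
def pd {n : ℕ} (i : Fin n) (f : E n → ℝ) : E n → ℝ :=
  fun x => fderiv ℝ f x (EuclideanSpace.single i 1)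

/-- Mixed partial derivative `∂^α` associated with the multi-index `α`. -/
def mpd {n : ℕ} (α : Fin n → ℕ) (f : E n → ℝ) : E n → ℝ :=
  (List.finRange n).foldr (fun i g => (pd i)^[α i] g) f

/-- The order `|α|` of a multi-index. -/
def mdeg {n : ℕ} (α : Fin n → ℕ) : ℕ := ∑ j, α j

/-- Index type for the natural basis of quadratic polynomials in `n` variables:
`1`, the `n` linear monomials, and the quadratic monomials indexed by unordered pairs.
Its cardinality is `q + 1 = (n+1)(n+2)/2`. -/
abbrev BIdx (n : ℕ) := Unit ⊕ Fin n ⊕ Sym2 (Fin n)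

/-- The natural basis `1, x_1, …, x_n, (1/2)x_1², x_1x_2, …, (1/2)x_n²` of `P_n^2`. -/
def natBasis {n : ℕ} : BIdx n → E n → ℝ
  | Sum.inl _ => fun _ => 1
  | Sum.inr (Sum.inl i) => fun x => x i
  | Sum.inr (Sum.inr s) => fun x =>
      Sym2.lift ⟨fun i j => (if i = j then (1:ℝ)/2 else 1) * (x i * x j), by
        intro a b
        by_cases h : a = b
        · subst h; ring
        · simp only [if_neg h, if_neg (Ne.symm h)]; ring⟩ s

/-- The base point `y^0` of interpolation data. -/
def center {n : ℕ} (y : BIdx n → E n) : E n := y (Sum.inl ())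

/-- `Δ(Y) = max_i ‖y^i − y^0‖`. -/
def rad {n : ℕ} (y : BIdx n → E n) : ℝ :=
  Finset.univ.sup' Finset.univ_nonempty fun i => ‖y i - center y‖

/-- The normalized points `ŷ^i = (y^i − y^0)/Δ(Y)`. -/
def yhat {n : ℕ} (y : BIdx n → E n) (i : BIdx n) : E n := (rad y)⁻¹ • (y i - center y)

/-- The normalized interpolation matrix `M̂_{ij} = (∂^{α^i} φ_j)(ŷ^i)`. -/
def Mhat {n : ℕ} (y : BIdx n → E n) (α : BIdx n → Fin n → ℕ) : Matrix (BIdx n) (BIdx n) ℝ :=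
  Matrix.of fun i j => mpd (α i) (natBasis j) (yhat y i)

/-- The quadratic polynomial with coefficient vector `v` in the natural basis. -/
def evalP {n : ℕ} (v : BIdx n → ℝ) : E n → ℝ := fun x => ∑ j, v j * natBasis j x

/-- `v` lists the coefficient vectors of the Birkhoff interpolation polynomials:
`∂^{α^{i'}} λ_i (ŷ^{i'}) = δ_{i i'}`. -/
def BirkhoffLam {n : ℕ} (y : BIdx n → E n) (α : BIdx n → Fin n → ℕ)
    (v : BIdx n → BIdx n → ℝ) : Prop :=
  ∀ i i', mpd (α i') (evalP (v i)) (yhat y i') = if i = i' then 1 else 0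

/-- The spectral (ℓ²-operator) norm of a real matrix. -/
def specNorm {ι : Type*} [Fintype ι] [DecidableEq ι] (M : Matrix ι ι ℝ) : ℝ :=
  ‖Matrix.toEuclideanCLM (𝕜 := ℝ) M‖

/-- `q + 1 = (n+1)(n+2)/2`. -/
def Q1 (n : ℕ) : ℕ := (n + 1) * (n + 2) / 2

/-! The coefficient vector of `λ_i` in the natural basis is the `i`-th column of `M̂⁻¹`, so its
Euclidean norm is at most `‖M̂⁻¹‖₂`. Every partial derivative of a natural basis element is one of
`0, 1, x_k, x_k x_l (k ≠ l), x_k²/2`, hence bounded by `1` on the unit ball, which contains the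
normalized points `(x - y⁰)/Δ(Y)` for `x ∈ B(y⁰, Δ(Y))`. Cauchy–Schwarz over the `q + 1` basis
elements gives `|∂^α λ_i| ≤ ‖M̂⁻¹‖₂ √(q + 1) ≤ Λ`. -/

open scoped ContDiff Matrix

variable {n : ℕ}

theorem ContDiff.pd {f : E n → ℝ} (hf : ContDiff ℝ ∞ f) (i : Fin n) : ContDiff ℝ ∞ (pd i f) :=
  (hf.fderiv_right (by simp)).clm_apply contDiff_const

-- `pd i` is additive only on differentiable functions; on smooth ones it is a linear endomorphism.
variable (n) in
def smoothFun : Submodule ℝ (E n → ℝ) where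
  carrier := {f | ContDiff ℝ ∞ f}
  add_mem' {_ _} (hf : ContDiff ℝ ∞ _) (hg : ContDiff ℝ ∞ _) := hf.add hg
  zero_mem' := (contDiff_zero_fun : ContDiff ℝ ∞ fun _ : E n => (0 : ℝ))
  smul_mem' _ _ (hf : ContDiff ℝ ∞ _) := contDiff_const.smul hf

theorem mem_smoothFun {f : E n → ℝ} : f ∈ smoothFun n ↔ ContDiff ℝ ∞ f := Iff.rfl

def pdₗ (i : Fin n) : Module.End ℝ (smoothFun n) where
  toFun f := ⟨pd i f, (mem_smoothFun.1 f.2).pd i⟩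
  map_add' f g := by
    have hf := (mem_smoothFun.1 f.2).differentiable (by simp)
    have hg := (mem_smoothFun.1 g.2).differentiable (by simp)
    ext x
    simp [pd, fderiv_add (hf x) (hg x)]
  map_smul' c f := by
    ext x
    simp [pd, fderiv_const_smul_field]

def mpdₗ (a : Fin n → ℕ) : Module.End ℝ (smoothFun n) :=
  (List.finRange n).foldr (fun i T => pdₗ i ^ a i * T) 1

theorem coe_mpdₗ (a : Fin n → ℕ) (f : smoothFun n) : (mpdₗ a f : E n → ℝ) = mpd a f := by
  unfold mpdₗ mpd
  induction List.finRange n with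
  | nil => rfl
  | cons i l ih =>
    simp only [List.foldr_cons, Module.End.mul_apply, Module.End.pow_apply, ← ih]
    exact Function.Semiconj.iterate_right (f := Subtype.val) (fun _ => rfl) _ _

theorem mpd_sum_smul {ι : Type*} (s : Finset ι) (c : ι → ℝ) {f : ι → E n → ℝ}
    (hf : ∀ j, ContDiff ℝ ∞ (f j)) (a : Fin n → ℕ) :
    mpd a (∑ j ∈ s, c j • f j) = ∑ j ∈ s, c j • mpd a (f j) := by
  have h := congrArg Subtype.val
    (map_sum (mpdₗ a) (fun j => c j • (⟨f j, mem_smoothFun.2 (hf j)⟩ : smoothFun n)) s)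
  simp only [map_smul, Submodule.coe_sum, Submodule.coe_smul, coe_mpdₗ] at h
  exact h

theorem mpd_mem {S : Set (E n → ℝ)} (hS : ∀ i, Set.MapsTo (pd i) S S) (a : Fin n → ℕ)
    {f : E n → ℝ} (hf : f ∈ S) : mpd a f ∈ S := by
  unfold mpd
  induction List.finRange n with
  | nil => exact hf
  | cons i l ih => exact (hS i).iterate _ ih

theorem pd_const (i : Fin n) (c : ℝ) : pd i (fun _ : E n => c) = fun _ => 0 := by
  ext x
  simp [pd]

theorem pd_coord (i k : Fin n) : pd i (fun x : E n => x k) = fun _ => if k = i then 1 else 0 := by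
  ext x
  change (fderiv ℝ (EuclideanSpace.proj k : E n →L[ℝ] ℝ) x) _ = _
  rw [ContinuousLinearMap.fderiv]
  simp

theorem pd_const_mul (i : Fin n) (c : ℝ) (f : E n → ℝ) :
    pd i (fun x => c * f x) = fun x => c * pd i f x := by
  ext x
  change (fderiv ℝ (c • f) x) _ = _
  simp [fderiv_const_smul_field, pd]

theorem pd_mul (i : Fin n) {f g : E n → ℝ} (hf : Differentiable ℝ f) (hg : Differentiable ℝ g) :
    pd i (fun x => f x * g x) = fun x => pd i f x * g x + f x * pd i g x := by
  ext x
  simp only [pd]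
  rw [fderiv_fun_mul (hf x) (hg x)]
  simp only [add_apply, smul_apply, smul_eq_mul]
  ring

theorem pd_coord_mul (i k l : Fin n) :
    pd i (fun x : E n => x k * x l) =
      fun x => (if k = i then x l else 0) + (if l = i then x k else 0) := by
  rw [pd_mul i (by fun_prop) (by fun_prop), pd_coord, pd_coord]
  ext x
  split_ifs <;> ring

inductive IsNatBasisDeriv : (E n → ℝ) → Prop
  | zero : IsNatBasisDeriv fun _ => 0
  | one : IsNatBasisDeriv fun _ => 1
  | coord (k : Fin n) : IsNatBasisDeriv fun x => x k
  | mul (k l : Fin n) (h : k ≠ l) : IsNatBasisDeriv fun x => x k * x l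
  | halfSq (k : Fin n) : IsNatBasisDeriv fun x => 1 / 2 * (x k * x k)

namespace IsNatBasisDeriv

theorem pd {f : E n → ℝ} (hf : IsNatBasisDeriv f) (i : Fin n) :
    IsNatBasisDeriv (_root_.pd i f) := by
  cases hf with
  | zero => rw [pd_const]; exact zero
  | one => rw [pd_const]; exact zero
  | coord k =>
    rw [pd_coord]
    by_cases hk : k = i
    · simpa [hk] using one
    · simpa [hk] using zero
  | mul k l hkl =>
    rw [pd_coord_mul]
    by_cases hk : k = i
    · subst hk; simpa [Ne.symm hkl] using coord l
    by_cases hl : l = i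
    · simpa [hk, hl] using coord k
    · simpa [hk, hl] using zero
  | halfSq k =>
    rw [pd_const_mul, pd_coord_mul]
    by_cases hk : k = i
    · convert coord k using 2; simp [hk]; ring
    · simpa [hk] using zero

theorem contDiff {f : E n → ℝ} (hf : IsNatBasisDeriv f) : ContDiff ℝ ∞ f := by
  cases hf <;> fun_prop

theorem abs_le_one {f : E n → ℝ} (hf : IsNatBasisDeriv f) {x : E n} (hx : ‖x‖ ≤ 1) :
    |f x| ≤ 1 := by
  have hcoord (k : Fin n) : |x k| ≤ 1 := (PiLp.norm_apply_le x k).trans hx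
  cases hf with
  | zero => simp
  | one => simp
  | coord k => exact hcoord k
  | mul k l _ => rw [abs_mul]; exact mul_le_one₀ (hcoord k) (abs_nonneg _) (hcoord l)
  | halfSq k =>
    rw [abs_mul, abs_mul]
    have := mul_le_one₀ (hcoord k) (abs_nonneg _) (hcoord k)
    rw [abs_of_pos one_half_pos]
    linarith

theorem mpd {f : E n → ℝ} (hf : IsNatBasisDeriv f) (a : Fin n → ℕ) :
    IsNatBasisDeriv (_root_.mpd a f) :=
  mpd_mem (S := {f | IsNatBasisDeriv f}) (fun i _ hf => pd hf i) a hf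

end IsNatBasisDeriv

theorem isNatBasisDeriv_natBasis (j : BIdx n) : IsNatBasisDeriv (natBasis j) := by
  rcases j with _ | k | s
  · exact .one
  · exact .coord k
  · induction s using Sym2.ind with
    | _ k l =>
      by_cases hkl : k = l
      · subst hkl
        convert IsNatBasisDeriv.halfSq k using 1
        ext x
        simp [natBasis]
      · simpa [natBasis, hkl] using .mul k l hkl

theorem mpd_evalP (a : Fin n → ℕ) (w : BIdx n → ℝ) (x : E n) :
    mpd a (evalP w) x = ∑ j, w j * mpd a (natBasis j) x := by
  have hsum : evalP w = ∑ j, w j • natBasis j := by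
    ext x
    simp [evalP]
  rw [hsum, mpd_sum_smul _ _ fun j => (isNatBasisDeriv_natBasis j).contDiff]
  simp

theorem BirkhoffLam.mhat_mul_transpose {y : BIdx n → E n} {α : BIdx n → Fin n → ℕ}
    {v : BIdx n → BIdx n → ℝ} (hv : BirkhoffLam y α v) : Mhat y α * (Matrix.of v)ᵀ = 1 := by
  ext i' i
  calc (Mhat y α * (Matrix.of v)ᵀ) i' i = ∑ j, v i j * mpd (α i') (natBasis j) (yhat y i') := by
        simp [Matrix.mul_apply, Mhat, mul_comm]
    _ = (1 : Matrix (BIdx n) (BIdx n) ℝ) i' i := by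
        rw [← mpd_evalP, hv, Matrix.one_apply]
        simp [eq_comm]

theorem norm_col_le_specNorm {ι : Type*} [Fintype ι] [DecidableEq ι] (B : Matrix ι ι ℝ) (i : ι) :
    ‖WithLp.toLp 2 (B.col i)‖ ≤ specNorm B := by
  have hcol : Matrix.toEuclideanCLM (𝕜 := ℝ) B (EuclideanSpace.single i 1) =
      WithLp.toLp 2 (B.col i) := by
    change Matrix.toEuclideanCLM (𝕜 := ℝ) B (WithLp.toLp 2 (Pi.single i 1)) = _
    rw [Matrix.toEuclideanCLM_toLp, Matrix.mulVec_single_one]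
  calc ‖WithLp.toLp 2 (B.col i)‖ ≤ specNorm B * ‖EuclideanSpace.single i (1 : ℝ)‖ :=
        hcol ▸ (Matrix.toEuclideanCLM (𝕜 := ℝ) B).le_opNorm _
    _ = specNorm B := by simp

theorem BirkhoffLam.norm_le_specNorm_inv {y : BIdx n → E n} {α : BIdx n → Fin n → ℕ}
    {v : BIdx n → BIdx n → ℝ} (hv : BirkhoffLam y α v) (i : BIdx n) :
    ‖WithLp.toLp 2 (v i)‖ ≤ specNorm (Mhat y α)⁻¹ := by
  rw [Matrix.inv_eq_right_inv hv.mhat_mul_transpose]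
  simpa [Matrix.col_transpose] using norm_col_le_specNorm (Matrix.of v)ᵀ i

theorem abs_sum_mul_le_norm_mul_sqrt_card {ι : Type*} [Fintype ι] (w c : ι → ℝ)
    (hc : ∀ j, |c j| ≤ 1) :
    |∑ j, w j * c j| ≤ ‖WithLp.toLp 2 w‖ * √(Fintype.card ι) := by
  have hinner : ∑ j, w j * c j = inner ℝ (WithLp.toLp 2 w) (WithLp.toLp 2 c) := by
    simp [EuclideanSpace.inner_toLp_toLp, dotProduct, mul_comm]
  have hc_norm : ‖WithLp.toLp 2 c‖ ≤ √(Fintype.card ι) := by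
    rw [EuclideanSpace.norm_eq]
    refine Real.sqrt_le_sqrt ?_
    calc ∑ j, ‖c j‖ ^ 2 ≤ ∑ _j : ι, (1 : ℝ) :=
          Finset.sum_le_sum fun j _ => pow_le_one₀ (norm_nonneg _) (hc j)
      _ = Fintype.card ι := by simp
  rw [hinner]
  exact (abs_real_inner_le_norm _ _).trans (by gcongr)

theorem card_BIdx (n : ℕ) : Fintype.card (BIdx n) = Q1 n := by
  have hQ : (n + 1) * (n + 2) = (n + 1) * n + 2 * (n + 1) := by ring
  simp only [Fintype.card_sum, Fintype.card_unit, Fintype.card_fin, Sym2.card,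
    Nat.choose_two_right, Nat.add_sub_cancel, Q1, hQ, Nat.add_mul_div_left _ _ two_pos]
  omega

theorem norm_inv_smul_sub_le_one {F : Type*} [NormedAddCommGroup F] [NormedSpace ℝ F]
    {c x : F} {r : ℝ} (hx : x ∈ Metric.closedBall c r) : ‖r⁻¹ • (x - c)‖ ≤ 1 := by
  have hr : 0 ≤ r := dist_nonneg.trans hx
  rw [norm_smul, Real.norm_of_nonneg (inv_nonneg.2 hr), ← dist_eq_norm]
  exact inv_mul_le_one_of_le₀ hx hr

theorem lambda_poised_of_invnorm_general {n : ℕ}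
    (y : BIdx n → E n) (α : BIdx n → Fin n → ℕ)
    (A : Finset (Fin n → ℕ))
    (v : BIdx n → BIdx n → ℝ) (hv : BirkhoffLam y α v)
    (Λ : ℝ)
    (hM : specNorm (Mhat y α)⁻¹ ≤ Λ / Real.sqrt (Q1 n)) :
    ∀ i : BIdx n, ∀ a ∈ A, ∀ x ∈ closedBall (center y) (rad y),
      |mpd a (evalP (v i)) ((rad y)⁻¹ • (x - center y))| ≤ Λ := by
  intro i a _ x hx
  have hQ : 0 < √(Q1 n : ℝ) := by
    rw [← card_BIdx]
    exact Real.sqrt_pos.2 (Nat.cast_pos.2 Fintype.card_pos)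
  have hbasis (j : BIdx n) : |mpd a (natBasis j) ((rad y)⁻¹ • (x - center y))| ≤ 1 :=
    ((isNatBasisDeriv_natBasis j).mpd a).abs_le_one (norm_inv_smul_sub_le_one hx)
  rw [mpd_evalP]
  calc _ ≤ ‖WithLp.toLp 2 (v i)‖ * √(Q1 n : ℝ) := by
        rw [← card_BIdx]
        exact abs_sum_mul_le_norm_mul_sqrt_card _ _ hbasis
    _ ≤ Λ / √(Q1 n : ℝ) * √(Q1 n : ℝ) := by
        gcongr
        exact (hv.norm_le_specNorm_inv i).trans hM
    _ = Λ := div_mul_cancel₀ _ hQ.ne'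

/-- forward direction of Theorem 3.14-analogue: if
`‖M̂⁻¹‖₂ ≤ Λ/√(q+1)` then the poised data `D` is `Λ`-poised with respect to `A`
in the ball `B(y^0, Δ(Y))`. -/
theorem lambda_poised_of_invnorm {n : ℕ} (hn : 1 ≤ n)
    (y : BIdx n → E n) (α : BIdx n → Fin n → ℕ)
    (A : Finset (Fin n → ℕ)) (h0A : (fun _ => 0) ∈ A) (hA : ∀ a ∈ A, mdeg a ≤ 2)
    (hαA : ∀ i, α i ∈ A)
    (hrad : 0 < rad y) (hpoised : IsUnit (Mhat y α))
    (v : BIdx n → BIdx n → ℝ) (hv : BirkhoffLam y α v)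
    (Λ : ℝ)
    (hM : specNorm (Mhat y α)⁻¹ ≤ Λ / Real.sqrt (Q1 n)) :
    ∀ i : BIdx n, ∀ a ∈ A, ∀ x ∈ closedBall (center y) (rad y),
      |mpd a (evalP (v i)) ((rad y)⁻¹ • (x - center y))| ≤ Λ :=
  lambda_poised_of_invnorm_general y α A v hv Λ hM
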